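/- arXiv:2602.06206 — 2 statements merged into one kernel-verified Lean document; each statement's English description precedes it below -/
import Mathlib

section
/- With ε(γ) the piecewise-linear approximation (slope -χ on (ρ_L,ρ_H)) and X a Gamma random variable with integer shape m_1 and rate ϑ_1 > 0 (so CDF F(x) = 1 - e^{-x ϑ_1} ∑_{j=0}^{m_1-1}(xϑ_1)^j/j!), the average E[ε(X)] equals χ[(ρ_H - ρ_L) - (1/ϑ_1) ∑_{j=0}^{m_1-1}( e^{-ρ_L ϑ_1} ∑_{l=0}^{j} (ρ_L ϑ_1)^l/l! - e^{-ρ_H ϑ_1} ∑_{l=0}^{j} (ρ_H ϑ_1)^l/l! )]. -/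
/-! Writing `ρ_L, ρ_H = τ ∓ 1/(2χ)`, the approximation `blerApprox χ τ γ` is `χ` times the length
of `[ρ_L, ρ_H] ∩ [γ, ∞)`, so by Fubini its average is `χ ∫_{ρ_L}^{ρ_H} F`, with `F` the CDF of `X`.
For the Gamma CDF this integral is elementary: the derivatives of the Poisson weights
`e^{-xϑ} (xϑ)^l / l!` telescope, so `-(1/ϑ) e^{-xϑ} ∑_{l ≤ j} (xϑ)^l / l!` is an antiderivative
of `e^{-xϑ} (xϑ)^j / j!`. -/

open MeasureTheory Finset Nat

/-- Piecewise-linear approximation of the instantaneous BLER. -/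
noncomputable def blerApprox (χ τ : ℝ) (γ : ℝ) : ℝ :=
  if γ ≤ τ - 1 / (2 * χ) then 1
  else if γ ≥ τ + 1 / (2 * χ) then 0
  else 1 / 2 - χ * (γ - τ)

noncomputable def poissonTerm (ϑ : ℝ) (n : ℕ) (x : ℝ) : ℝ :=
  Real.exp (-x * ϑ) * ((x * ϑ) ^ n / n !)

section poissonTerm

variable (ϑ : ℝ)

theorem continuous_poissonTerm (n : ℕ) : Continuous (poissonTerm ϑ n) := by
  unfold poissonTerm
  fun_prop

theorem hasDerivAt_poissonTerm_zero (x : ℝ) :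
    HasDerivAt (poissonTerm ϑ 0) (-ϑ * poissonTerm ϑ 0 x) x := by
  have h0 : poissonTerm ϑ 0 = fun x => Real.exp (-x * ϑ) := by
    funext x
    simp [poissonTerm]
  rw [h0]
  exact ((hasDerivAt_neg x).mul_const ϑ).exp.congr_deriv (by ring)

theorem hasDerivAt_poissonTerm_succ (n : ℕ) (x : ℝ) :
    HasDerivAt (poissonTerm ϑ (n + 1))
      (ϑ * (poissonTerm ϑ n x - poissonTerm ϑ (n + 1) x)) x := by
  have hexp := ((hasDerivAt_neg x).mul_const ϑ).exp
  have hpow := (((hasDerivAt_id x).mul_const ϑ).pow (n + 1)).div_const ((n + 1)! : ℝ)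
  refine (hexp.fun_mul hpow).congr_deriv ?_
  simp only [poissonTerm, id, Pi.pow_apply, factorial_succ, cast_mul, cast_succ,
    add_tsub_cancel_right]
  field_simp
  ring

theorem hasDerivAt_sum_poissonTerm (j : ℕ) (x : ℝ) :
    HasDerivAt (fun x => ∑ l ∈ range (j + 1), poissonTerm ϑ l x)
      (-ϑ * poissonTerm ϑ j x) x := by
  induction j with
  | zero => simpa using hasDerivAt_poissonTerm_zero ϑ x
  | succ j ih =>
    simp_rw [sum_range_succ _ (j + 1)]
    exact (ih.fun_add (hasDerivAt_poissonTerm_succ ϑ j x)).congr_deriv (by ring)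

variable {ϑ}

theorem integral_poissonTerm (hϑ : ϑ ≠ 0) (j : ℕ) (a b : ℝ) :
    ∫ x in a..b, poissonTerm ϑ j x =
      1 / ϑ * (∑ l ∈ range (j + 1), poissonTerm ϑ l a -
        ∑ l ∈ range (j + 1), poissonTerm ϑ l b) := by
  have hderiv (x : ℝ) :
      HasDerivAt (fun x => -(1 / ϑ) * ∑ l ∈ range (j + 1), poissonTerm ϑ l x)
        (poissonTerm ϑ j x) x :=
    ((hasDerivAt_sum_poissonTerm ϑ j x).const_mul (-(1 / ϑ))).congr_deriv (by field_simp)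
  rw [intervalIntegral.integral_eq_sub_of_hasDerivAt (fun x _ => hderiv x)
    ((continuous_poissonTerm ϑ j).intervalIntegrable a b)]
  ring

theorem integral_one_sub_exp_mul_sum (hϑ : ϑ ≠ 0) (m : ℕ) (a b : ℝ) :
    ∫ x in a..b, (1 - Real.exp (-x * ϑ) * ∑ j ∈ range m, (x * ϑ) ^ j / (j ! : ℝ)) =
      (b - a) - 1 / ϑ * ∑ j ∈ range m,
        (Real.exp (-a * ϑ) * ∑ l ∈ range (j + 1), (a * ϑ) ^ l / (l ! : ℝ) -
          Real.exp (-b * ϑ) * ∑ l ∈ range (j + 1), (b * ϑ) ^ l / (l ! : ℝ)) := by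
  have h_exp_mul_sum (x : ℝ) (s : Finset ℕ) :
      Real.exp (-x * ϑ) * ∑ j ∈ s, (x * ϑ) ^ j / (j ! : ℝ) = ∑ j ∈ s, poissonTerm ϑ j x :=
    mul_sum _ _ _
  simp only [h_exp_mul_sum]
  rw [intervalIntegral.integral_sub intervalIntegrable_const
      ((continuous_finsetSum _ fun j _ => continuous_poissonTerm ϑ j).intervalIntegrable a b),
    intervalIntegral.integral_finsetSum
      (fun j _ => (continuous_poissonTerm ϑ j).intervalIntegrable a b),
    integral_one, mul_sum]
  simp only [integral_poissonTerm hϑ]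

end poissonTerm

open Set in
theorem blerApprox_eq_mul_volume_real {χ : ℝ} (hχ : 0 < χ) (τ γ : ℝ) :
    blerApprox χ τ γ =
      χ * volume.real (Icc (τ - 1 / (2 * χ)) (τ + 1 / (2 * χ)) ∩ Ici γ) := by
  rw [← Ici_inter_Iic, Set.inter_right_comm, Ici_inter_Ici, Ici_inter_Iic, Real.volume_real_Icc,
    blerApprox]
  have hχh : χ * (1 / (2 * χ)) = 1 / 2 := by field_simp
  have hh : 0 < 1 / (2 * χ) := by positivity
  set h := 1 / (2 * χ)
  split_ifs with hL hH
  · rw [max_eq_left hL, max_eq_left (by linarith)]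
    linarith
  · rw [max_eq_right (a := τ - h) (by linarith), max_eq_right (by linarith), mul_zero]
  · rw [max_eq_right (a := τ - h) (by linarith), max_eq_left (by linarith)]
    linarith

open Set in
theorem integral_measureReal_inter_Ici {Ω : Type*} [MeasurableSpace Ω] (ℙ : Measure Ω)
    [IsFiniteMeasure ℙ] {X : Ω → ℝ} (hX : Measurable X) {s : Set ℝ} (hs : volume s ≠ ⊤) :
    ∫ ω, volume.real (s ∩ Ici (X ω)) ∂ℙ = ∫ x in s, ℙ.real {ω | X ω ≤ x} := by
  have : Fact (volume s < ⊤) := ⟨hs.lt_top⟩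
  let S : Set (Ω × ℝ) := {p | X p.1 ≤ p.2}
  have hS : MeasurableSet S := measurableSet_le (hX.comp measurable_fst) measurable_snd
  have hint : Integrable (Function.uncurry fun ω x => S.indicator (1 : Ω × ℝ → ℝ) (ω, x))
      (ℙ.prod (volume.restrict s)) :=
    (integrable_indicator_iff hS).2 (integrableOn_const (measure_lt_top _ _).ne)
  calc ∫ ω, volume.real (s ∩ Ici (X ω)) ∂ℙ
      = ∫ ω, ∫ x, S.indicator 1 (ω, x) ∂volume.restrict s ∂ℙ := by
        congr 1 with ω
        rw [inter_comm, ← measureReal_restrict_apply measurableSet_Ici,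
          ← integral_indicator_one measurableSet_Ici]
        rfl
    _ = ∫ x in s, ∫ ω, S.indicator 1 (ω, x) ∂ℙ := integral_integral_swap hint
    _ = ∫ x in s, ℙ.real {ω | X ω ≤ x} := by
        congr 1 with x
        rw [← integral_indicator_one (s := {ω | X ω ≤ x}) (hX measurableSet_Iic)]
        rfl

theorem avg_bler_gamma_closed_form_general
    {Ω : Type*} [MeasurableSpace Ω] (ℙ : Measure Ω) [IsProbabilityMeasure ℙ]
    (X : Ω → ℝ) (hX : Measurable X)
    (χ τ : ℝ) (hχ : 0 < χ) (hτ : 1 / (2 * χ) < τ)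
    (m₁ : ℕ) (ϑ₁ : ℝ) (hϑ₁ : 0 < ϑ₁)
    (hcdf : ∀ x : ℝ, 0 ≤ x → (ℙ {ω | X ω ≤ x}).toReal =
      1 - Real.exp (-x * ϑ₁) * ∑ j ∈ Finset.range m₁, (x * ϑ₁) ^ j / (j ! : ℝ)) :
    ∫ ω, blerApprox χ τ (X ω) ∂ℙ =
      χ * (((τ + 1 / (2 * χ)) - (τ - 1 / (2 * χ))) -
        (1 / ϑ₁) * ∑ j ∈ Finset.range m₁,
          (Real.exp (-(τ - 1 / (2 * χ)) * ϑ₁) *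
              ∑ l ∈ Finset.range (j + 1), ((τ - 1 / (2 * χ)) * ϑ₁) ^ l / (l ! : ℝ) -
            Real.exp (-(τ + 1 / (2 * χ)) * ϑ₁) *
              ∑ l ∈ Finset.range (j + 1), ((τ + 1 / (2 * χ)) * ϑ₁) ^ l / (l ! : ℝ))) := by
  have hh : 0 < 1 / (2 * χ) := by positivity
  calc ∫ ω, blerApprox χ τ (X ω) ∂ℙ
      = χ * ∫ ω, volume.real
          (Set.Icc (τ - 1 / (2 * χ)) (τ + 1 / (2 * χ)) ∩ Set.Ici (X ω)) ∂ℙ := by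
        simp only [blerApprox_eq_mul_volume_real hχ, integral_const_mul]
    _ = χ * ∫ x in (τ - 1 / (2 * χ))..(τ + 1 / (2 * χ)),
          (1 - Real.exp (-x * ϑ₁) * ∑ j ∈ Finset.range m₁, (x * ϑ₁) ^ j / (j ! : ℝ)) := by
        rw [integral_measureReal_inter_Ici ℙ hX measure_Icc_lt_top.ne,
          integral_Icc_eq_integral_Ioc, intervalIntegral.integral_of_le (by linarith)]
        exact congrArg _ <|
          setIntegral_congr_fun measurableSet_Ioc fun x hx => hcdf x (by linarith [hx.1])
    _ = _ := by rw [integral_one_sub_exp_mul_sum hϑ₁.ne']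

/-- closed-form first-hop average BLER for a Gamma-distributed SNR. -/
theorem avg_bler_gamma_closed_form
    {Ω : Type*} [MeasurableSpace Ω] (ℙ : Measure Ω) [IsProbabilityMeasure ℙ]
    (X : Ω → ℝ) (hX : Measurable X) (hXnonneg : ∀ ω, 0 ≤ X ω)
    (χ τ : ℝ) (hχ : 0 < χ) (hτ : 1 / (2 * χ) < τ)
    (m₁ : ℕ) (hm₁ : 1 ≤ m₁) (ϑ₁ : ℝ) (hϑ₁ : 0 < ϑ₁)
    (hcdf : ∀ x : ℝ, 0 ≤ x → (ℙ {ω | X ω ≤ x}).toReal =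
      1 - Real.exp (-x * ϑ₁) * ∑ j ∈ Finset.range m₁, (x * ϑ₁) ^ j / (j ! : ℝ)) :
    ∫ ω, blerApprox χ τ (X ω) ∂ℙ =
      χ * (((τ + 1 / (2 * χ)) - (τ - 1 / (2 * χ))) -
        (1 / ϑ₁) * ∑ j ∈ Finset.range m₁,
          (Real.exp (-(τ - 1 / (2 * χ)) * ϑ₁) *
              ∑ l ∈ Finset.range (j + 1), ((τ - 1 / (2 * χ)) * ϑ₁) ^ l / (l ! : ℝ) -
            Real.exp (-(τ + 1 / (2 * χ)) * ϑ₁) *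
              ∑ l ∈ Finset.range (j + 1), ((τ + 1 / (2 * χ)) * ϑ₁) ^ l / (l ! : ℝ))) :=
  avg_bler_gamma_closed_form_general ℙ X hX χ τ hχ hτ m₁ ϑ₁ hϑ₁ hcdf
end

section
/- Fix integer m ≥ 1, N ≥ 1, λ_n > 0, χ > 0, and 0 < ρ_L < ρ_H. Define the exact average BLER ε̄(ϑ) = χ ∫_{ρ_L}^{ρ_H} ∏_{n=1}^N [γ(m, xϑ/λ_n)/Γ(m)] dx and the asymptote A(ϑ) = χ (ρ_H^{mN+1} − ρ_L^{mN+1})/(mN+1) · (ϑ^m/m!)^N ∏_n λ_n^{−m}. Then ε̄(ϑ)/A(ϑ) → 1 as ϑ → 0⁺. -/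
open Real Filter Finset Nat

/-- Lower incomplete gamma function for integer shape. -/
noncomputable def lowerIncGamma (s : ℕ) (z : ℝ) : ℝ :=
  ∫ t in (0:ℝ)..z, t ^ (s - 1) * Real.exp (-t)

/-! For `z ≥ 0` the integrand `t ^ (m - 1) * exp (-t)` of `γ(m, z)` lies between
`exp (-z) * t ^ (m - 1)` and `t ^ (m - 1)` on `[0, z]`, so
`exp (-z) * z ^ m / m! ≤ γ(m, z) / Γ(m) ≤ z ^ m / m!`. Taking the product over `n` at
`z = x ϑ / λₙ` and integrating over `x ∈ [ρL, ρH]` squeezes the exact BLER between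
`(∏ₙ exp (-ρH ϑ / λₙ)) * A(ϑ)` and `A(ϑ)`, and the prefactor tends to `1` as `ϑ → 0⁺`. -/

noncomputable def regLowerIncGamma (m : ℕ) (z : ℝ) : ℝ :=
  lowerIncGamma m z / ((m - 1)! : ℝ)

@[fun_prop]
theorem continuous_lowerIncGamma (s : ℕ) : Continuous (lowerIncGamma s) :=
  intervalIntegral.continuous_primitive
    (fun a b => Continuous.intervalIntegrable (by fun_prop) a b) 0

@[fun_prop]
theorem continuous_regLowerIncGamma (m : ℕ) : Continuous (regLowerIncGamma m) :=
  (continuous_lowerIncGamma m).div_const _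

theorem integral_pow_pred {m : ℕ} (hm : m ≠ 0) (z : ℝ) :
    ∫ t in (0 : ℝ)..z, t ^ (m - 1) = z ^ m / m := by
  rw [integral_pow, Nat.sub_add_cancel (Nat.one_le_iff_ne_zero.mpr hm), zero_pow hm,
    Nat.cast_pred (Nat.pos_of_ne_zero hm)]
  simp

section Bounds

variable {m : ℕ} {z : ℝ}

theorem lowerIncGamma_le (hm : m ≠ 0) (hz : 0 ≤ z) : lowerIncGamma m z ≤ z ^ m / m := by
  rw [← integral_pow_pred hm]
  refine intervalIntegral.integral_mono_on hz
    (Continuous.intervalIntegrable (by fun_prop) 0 z)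
    (Continuous.intervalIntegrable (by fun_prop) 0 z) fun t ht => ?_
  have hexp : exp (-t) ≤ 1 := exp_le_one_iff.mpr (by linarith [ht.1])
  simpa using mul_le_mul_of_nonneg_left hexp (pow_nonneg ht.1 (m - 1))

theorem exp_neg_mul_le_lowerIncGamma (hm : m ≠ 0) (hz : 0 ≤ z) :
    exp (-z) * (z ^ m / m) ≤ lowerIncGamma m z := by
  rw [← integral_pow_pred hm, ← intervalIntegral.integral_const_mul]
  refine intervalIntegral.integral_mono_on hz
    (Continuous.intervalIntegrable (by fun_prop) 0 z)
    (Continuous.intervalIntegrable (by fun_prop) 0 z) fun t ht => ?_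
  rw [mul_comm]
  exact mul_le_mul_of_nonneg_left (exp_le_exp.mpr (neg_le_neg ht.2)) (pow_nonneg ht.1 _)

theorem pow_div_div_factorial_pred (hm : m ≠ 0) :
    z ^ m / m / ((m - 1)! : ℝ) = z ^ m / (m ! : ℝ) := by
  rw [div_div, ← Nat.cast_mul, Nat.mul_factorial_pred hm]

theorem regLowerIncGamma_le (hm : m ≠ 0) (hz : 0 ≤ z) :
    regLowerIncGamma m z ≤ z ^ m / (m ! : ℝ) := by
  rw [← pow_div_div_factorial_pred hm]
  exact div_le_div_of_nonneg_right (lowerIncGamma_le hm hz) (by positivity)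

theorem exp_neg_mul_le_regLowerIncGamma (hm : m ≠ 0) (hz : 0 ≤ z) :
    exp (-z) * (z ^ m / (m ! : ℝ)) ≤ regLowerIncGamma m z := by
  rw [← pow_div_div_factorial_pred hm, ← mul_div_assoc]
  exact div_le_div_of_nonneg_right (exp_neg_mul_le_lowerIncGamma hm hz) (by positivity)

end Bounds

section Products

variable {ι : Type*} [Fintype ι] {m : ℕ}

theorem prod_regLowerIncGamma_le (hm : m ≠ 0) {z : ι → ℝ} (hz : ∀ i, 0 ≤ z i) :
    ∏ i, regLowerIncGamma m (z i) ≤ ∏ i, z i ^ m / (m ! : ℝ) :=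
  prod_le_prod (fun i _ => (mul_nonneg (exp_pos _).le (by have := hz i; positivity)).trans
      (exp_neg_mul_le_regLowerIncGamma hm (hz i)))
    fun i _ => regLowerIncGamma_le hm (hz i)

theorem prod_exp_neg_mul_le_prod_regLowerIncGamma (hm : m ≠ 0) {z w : ι → ℝ}
    (hz : ∀ i, 0 ≤ z i) (hzw : ∀ i, z i ≤ w i) :
    (∏ i, exp (-w i)) * ∏ i, z i ^ m / (m ! : ℝ) ≤ ∏ i, regLowerIncGamma m (z i) := by
  rw [← prod_mul_distrib]
  refine prod_le_prod (fun i _ => by have := hz i; positivity) fun i _ => ?_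
  calc exp (-w i) * (z i ^ m / (m ! : ℝ))
      ≤ exp (-z i) * (z i ^ m / (m ! : ℝ)) :=
        mul_le_mul_of_nonneg_right (exp_le_exp.mpr (neg_le_neg (hzw i)))
          (by have := hz i; positivity)
    _ ≤ regLowerIncGamma m (z i) := exp_neg_mul_le_regLowerIncGamma hm (hz i)

theorem prod_pow_div_factorial_eq (lam : ι → ℝ) (x ϑ : ℝ) :
    ∏ i, (x * ϑ / lam i) ^ m / (m ! : ℝ) =
      x ^ (m * Fintype.card ι) * ((ϑ ^ m / (m ! : ℝ)) ^ Fintype.card ι * ∏ i, (lam i)⁻¹ ^ m) := by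
  have h : ∀ i, (x * ϑ / lam i) ^ m / (m ! : ℝ) = x ^ m * (ϑ ^ m / (m ! : ℝ)) * (lam i)⁻¹ ^ m :=
    fun i => by rw [div_eq_mul_inv _ (lam i)]; ring
  rw [prod_congr rfl fun i _ => h i, prod_mul_distrib, prod_const, Finset.card_univ, pow_mul]
  ring

theorem integral_prod_pow_div_factorial (lam : ι → ℝ) (a b ϑ : ℝ) :
    ∫ x in a..b, ∏ i, (x * ϑ / lam i) ^ m / (m ! : ℝ) =
      (b ^ (m * Fintype.card ι + 1) - a ^ (m * Fintype.card ι + 1)) / (m * Fintype.card ι + 1) *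
        ((ϑ ^ m / (m ! : ℝ)) ^ Fintype.card ι * ∏ i, (lam i)⁻¹ ^ m) := by
  simp_rw [prod_pow_div_factorial_eq, intervalIntegral.integral_mul_const, integral_pow]
  push_cast
  rfl

end Products

section Integrals

variable {ι : Type*} [Fintype ι] {m : ℕ} {lam : ι → ℝ} {a b ϑ : ℝ}

theorem integral_prod_regLowerIncGamma_le (hm : m ≠ 0) (hlam : ∀ i, 0 ≤ lam i) (ha : 0 ≤ a)
    (hab : a ≤ b) (hϑ : 0 ≤ ϑ) :
    ∫ x in a..b, ∏ i, regLowerIncGamma m (x * ϑ / lam i) ≤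
      ∫ x in a..b, ∏ i, (x * ϑ / lam i) ^ m / (m ! : ℝ) :=
  intervalIntegral.integral_mono_on hab
    (Continuous.intervalIntegrable (by fun_prop) a b)
    (Continuous.intervalIntegrable (by fun_prop) a b) fun x hx =>
      prod_regLowerIncGamma_le hm fun i => div_nonneg (mul_nonneg (ha.trans hx.1) hϑ) (hlam i)

theorem prod_exp_neg_mul_integral_le (hm : m ≠ 0) (hlam : ∀ i, 0 ≤ lam i) (ha : 0 ≤ a)
    (hab : a ≤ b) (hϑ : 0 ≤ ϑ) :
    (∏ i, exp (-(b * ϑ / lam i))) * ∫ x in a..b, ∏ i, (x * ϑ / lam i) ^ m / (m ! : ℝ) ≤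
      ∫ x in a..b, ∏ i, regLowerIncGamma m (x * ϑ / lam i) := by
  rw [← intervalIntegral.integral_const_mul]
  refine intervalIntegral.integral_mono_on hab
    (Continuous.intervalIntegrable (by fun_prop) a b)
    (Continuous.intervalIntegrable (by fun_prop) a b) fun x hx => ?_
  exact prod_exp_neg_mul_le_prod_regLowerIncGamma hm
    (fun i => div_nonneg (mul_nonneg (ha.trans hx.1) hϑ) (hlam i))
    fun i => div_le_div_of_nonneg_right (mul_le_mul_of_nonneg_right hx.2 hϑ) (hlam i)

end Integrals

theorem tendsto_div_of_mul_le_of_le {α : Type*} {l : Filter α} {f g D : α → ℝ}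
    (hg : Tendsto g l (nhds 1)) (hD : ∀ᶠ a in l, 0 < D a) (hlow : ∀ᶠ a in l, g a * D a ≤ f a)
    (hup : ∀ᶠ a in l, f a ≤ D a) : Tendsto (fun a => f a / D a) l (nhds 1) :=
  tendsto_of_tendsto_of_tendsto_of_le_of_le' hg tendsto_const_nhds
    ((hD.and hlow).mono fun _ h => (le_div_iff₀ h.1).2 h.2)
    ((hD.and hup).mono fun _ h => (div_le_one h.1).2 h.2)

theorem second_hop_bler_high_snr_general (N m : ℕ) (hm : 1 ≤ m)
    (lam : Fin N → ℝ) (hlam : ∀ n, 0 < lam n)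
    (χ ρL ρH : ℝ) (hχ : 0 < χ) (hρL : 0 < ρL) (hρ : ρL < ρH) :
    Tendsto
      (fun ϑ : ℝ =>
        (χ * ∫ x in ρL..ρH, ∏ n, lowerIncGamma m (x * ϑ / lam n) / ((m - 1)! : ℝ)) /
          (χ * (ρH ^ (m * N + 1) - ρL ^ (m * N + 1)) / (m * N + 1) *
            (ϑ ^ m / (m ! : ℝ)) ^ N * ∏ n, (lam n)⁻¹ ^ m))
      (nhdsWithin 0 (Set.Ioi 0)) (nhds 1) := by
  have hpos : 0 < ρH ^ (m * N + 1) - ρL ^ (m * N + 1) :=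
    sub_pos.2 (pow_lt_pow_left₀ hρ hρL.le (by omega))
  have hden : ∀ ϑ, χ * (ρH ^ (m * N + 1) - ρL ^ (m * N + 1)) / (m * N + 1) *
      (ϑ ^ m / (m ! : ℝ)) ^ N * ∏ n, (lam n)⁻¹ ^ m =
        χ * ∫ x in ρL..ρH, ∏ n, (x * ϑ / lam n) ^ m / (m ! : ℝ) := fun ϑ => by
    rw [integral_prod_pow_div_factorial, Fintype.card_fin]
    ring
  have hm₀ : m ≠ 0 := by omega
  have hlam₀ : ∀ n, 0 ≤ lam n := fun n => (hlam n).le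
  refine tendsto_div_of_mul_le_of_le (g := fun ϑ => ∏ n, exp (-(ρH * ϑ / lam n))) ?_
    (eventually_nhdsWithin_of_forall fun ϑ hϑ => ?_)
    (eventually_nhdsWithin_of_forall fun ϑ hϑ => ?_)
    (eventually_nhdsWithin_of_forall fun ϑ hϑ => ?_)
  · have hg : Continuous fun ϑ => ∏ n, exp (-(ρH * ϑ / lam n)) := by fun_prop
    simpa using (hg.tendsto 0).mono_left nhdsWithin_le_nhds
  · have hϑ : 0 < ϑ := hϑ
    have hprod : 0 < ∏ n, (lam n)⁻¹ ^ m := prod_pos fun n _ => pow_pos (inv_pos.2 (hlam n)) m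
    exact mul_pos (mul_pos (div_pos (mul_pos hχ hpos) (by positivity)) (by positivity)) hprod
  · rw [hden, mul_left_comm]
    exact mul_le_mul_of_nonneg_left
      (prod_exp_neg_mul_integral_le hm₀ hlam₀ hρL.le hρ.le hϑ.le) hχ.le
  · rw [hden]
    exact mul_le_mul_of_nonneg_left
      (integral_prod_regLowerIncGamma_le hm₀ hlam₀ hρL.le hρ.le hϑ.le)
      hχ.le

/-- high-SNR asymptotics of the second-hop average BLER
(Theorem 1 of the paper): the exact average BLER is asymptotically equal to the
closed-form asymptote as ϑ → 0⁺. -/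
theorem second_hop_bler_high_snr (N m : ℕ) (hN : 1 ≤ N) (hm : 1 ≤ m)
    (lam : Fin N → ℝ) (hlam : ∀ n, 0 < lam n)
    (χ ρL ρH : ℝ) (hχ : 0 < χ) (hρL : 0 < ρL) (hρ : ρL < ρH) :
    Tendsto
      (fun ϑ : ℝ =>
        (χ * ∫ x in ρL..ρH, ∏ n, lowerIncGamma m (x * ϑ / lam n) / ((m - 1)! : ℝ)) /
          (χ * (ρH ^ (m * N + 1) - ρL ^ (m * N + 1)) / (m * N + 1) *
            (ϑ ^ m / (m ! : ℝ)) ^ N * ∏ n, (lam n)⁻¹ ^ m))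
      (nhdsWithin 0 (Set.Ioi 0)) (nhds 1) :=
  second_hop_bler_high_snr_general N m hm lam hlam χ ρL ρH hχ hρL hρ
end
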